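/- arXiv:1912.10863 — 3 statements merged into one kernel-verified Lean document; each statement's English description precedes it below -/
import Mathlib

section
/- Let φ̃ : ℝ → ℝ be an increasing homeomorphism of ℝ satisfying φ̃(θ + 2π) = φ̃(θ) + 2π for all θ ∈ ℝ (the lift of an orientation-preserving circle homeomorphism). Then the limit lim_{n→∞} (1/n)·(1/(4π²))·∫₀^{2π} (φ̃ⁿ(θ) − θ) dθ exists and equals the translation number rot̃(φ̃) = lim_{n→∞} φ̃ⁿ(0)/(2πn). In other words, the homogenization of the quasi-morphism f(φ̃) = (1/(4π²))∫₀^{2π}(φ̃(θ) − θ)dθ is Poincaré's translation number. -/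
open Filter Topology Real

/-!
Rescaling by `2π` turns `φ` into a degree-one circle lift `ψ`, whose translation number is the
limit of `φⁿ(0)/(2πn)`. Each iterate `g = φⁿ` is monotone with `g(2π) = g(0) + 2π`, so
`∫₀^{2π} g` lies between `2π g(0)` and `2π g(2π) = 2π g(0) + 4π²`. Hence the normalized integral
differs from `φⁿ(0)/(2π)` by at most `1/2`, and after division by `n` both sequences have the
same limit.
-/

namespace CircleDeg1Lift

noncomputable def ofCommuteAddPeriod (φ : ℝ → ℝ) (hφ : Monotone φ) {T : ℝ} (hT : 0 < T)
    (hper : Function.Commute φ (· + T)) : CircleDeg1Lift where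
  toFun x := φ (T * x) / T
  monotone' _ _ hxy :=
    div_le_div_of_nonneg_right (hφ (mul_le_mul_of_nonneg_left hxy hT.le)) hT.le
  map_add_one' x := by
    have h : φ (T * x + T) = φ (T * x) + T := hper (T * x)
    simp only [mul_add, mul_one, h]
    field_simp

variable {φ : ℝ → ℝ} (hφ : Monotone φ) {T : ℝ} (hT : 0 < T) (hper : Function.Commute φ (· + T))

theorem semiconj_ofCommuteAddPeriod :
    Function.Semiconj (T * ·) (ofCommuteAddPeriod φ hφ hT hper) φ := fun x => by
  change T * (φ (T * x) / T) = φ (T * x)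
  field_simp

theorem tendsto_iterate_zero_div_translationNumber :
    Tendsto (fun n : ℕ => φ^[n] 0 / (T * n)) atTop
      (𝓝 (translationNumber (ofCommuteAddPeriod φ hφ hT hper))) := by
  refine (tendsto_translation_number₀ _).congr fun n => ?_
  have h := (semiconj_ofCommuteAddPeriod hφ hT hper).iterate_right n 0
  simp only [mul_zero] at h
  rw [coe_pow, ← h]
  field_simp

end CircleDeg1Lift

theorem abs_integral_sub_id_sub_mul_le {g : ℝ → ℝ} (hg : Monotone g) {T : ℝ} (hT : 0 ≤ T)
    (hgT : g T = g 0 + T) :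
    |(∫ θ in (0 : ℝ)..T, (g θ - θ)) - T * g 0| ≤ T ^ 2 / 2 := by
  have hgi : IntervalIntegrable g MeasureTheory.volume 0 T := hg.intervalIntegrable
  have hlow : T * g 0 ≤ ∫ θ in (0 : ℝ)..T, g θ := by
    simpa using intervalIntegral.integral_mono_on hT intervalIntegrable_const hgi
      fun θ hθ => hg hθ.1
  have hhigh : (∫ θ in (0 : ℝ)..T, g θ) ≤ T * g 0 + T * T := by
    simpa [hgT] using intervalIntegral.integral_mono_on hT hgi intervalIntegrable_const
      fun θ hθ => hg hθ.2
  rw [intervalIntegral.integral_sub hgi intervalIntegral.intervalIntegrable_id, integral_id,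
    abs_le]
  constructor <;> linarith

theorem tendsto_integral_iterate_sub_iterate_zero {φ : ℝ → ℝ} (hφ : Monotone φ) {T : ℝ}
    (hT : 0 < T) (hper : Function.Commute φ (· + T)) :
    Tendsto (fun n : ℕ => (1 / (n : ℝ)) * ((1 / T ^ 2) * ∫ θ in (0 : ℝ)..T, (φ^[n] θ - θ))
      - φ^[n] 0 / (T * n)) atTop (𝓝 0) := by
  have hbound : ∀ n : ℕ, |(1 / T ^ 2) * (∫ θ in (0 : ℝ)..T, (φ^[n] θ - θ)) - φ^[n] 0 / T|
      ≤ 1 / 2 := fun n => by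
    have hgT : φ^[n] T = φ^[n] 0 + T := by simpa using hper.iterate_left n 0
    have h := abs_integral_sub_id_sub_mul_le (hφ.iterate n) hT.le hgT
    rw [show (1 / T ^ 2) * (∫ θ in (0 : ℝ)..T, (φ^[n] θ - θ)) - φ^[n] 0 / T
        = ((∫ θ in (0 : ℝ)..T, (φ^[n] θ - θ)) - T * φ^[n] 0) / T ^ 2 by field_simp,
      abs_div, abs_of_pos (pow_pos hT 2), div_le_iff₀ (by positivity)]
    linarith
  have hhalf : Tendsto (fun n : ℕ => (1 / (n : ℝ)) * (1 / 2)) atTop (𝓝 0) := by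
    simpa using tendsto_one_div_atTop_nhds_zero_nat.mul_const (1 / 2 : ℝ)
  refine squeeze_zero_norm (fun n => ?_) hhalf
  rw [show (1 / (n : ℝ)) * ((1 / T ^ 2) * ∫ θ in (0 : ℝ)..T, (φ^[n] θ - θ)) - φ^[n] 0 / (T * n)
      = (1 / (n : ℝ)) * ((1 / T ^ 2) * (∫ θ in (0 : ℝ)..T, (φ^[n] θ - θ)) - φ^[n] 0 / T) by
        rw [mul_comm T, ← div_div]; ring,
    norm_mul, Real.norm_eq_abs, Real.norm_eq_abs, abs_of_nonneg (by positivity)]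
  exact mul_le_mul_of_nonneg_left (hbound n) (by positivity)

theorem homogenization_of_integral_quasimorphism_is_translation_number_general
    (φ : ℝ → ℝ) (hmono : StrictMono φ)
    (hper : ∀ θ : ℝ, φ (θ + 2 * π) = φ θ + 2 * π) :
    ∃ r : ℝ,
      Tendsto (fun n : ℕ => φ^[n] 0 / (2 * π * n)) atTop (𝓝 r) ∧
      Tendsto (fun n : ℕ =>
          (1 / (n : ℝ)) * ((1 / (4 * π ^ 2)) * ∫ θ in (0:ℝ)..(2 * π), (φ^[n] θ - θ)))
        atTop (𝓝 r) := by
  have hcomm : Function.Commute φ (· + 2 * π) := hper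
  have hrot := CircleDeg1Lift.tendsto_iterate_zero_div_translationNumber hmono.monotone
    two_pi_pos hcomm
  refine ⟨_, hrot, ?_⟩
  have hdiff := tendsto_integral_iterate_sub_iterate_zero hmono.monotone two_pi_pos hcomm
  rw [mul_pow, show (2 : ℝ) ^ 2 = 4 by norm_num] at hdiff
  simpa using hrot.add hdiff

/-- For an increasing homeomorphism `φ` of `ℝ` commuting with the
translation by `2π` (the lift of an orientation-preserving circle homeomorphism),
the homogenization of the quasi-morphism
`f(φ) = (1/(4π²)) ∫₀^{2π} (φ(θ) - θ) dθ` exists and equals Poincaré's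
translation number `rot̃(φ) = lim_n φⁿ(0)/(2πn)`. -/
theorem homogenization_of_integral_quasimorphism_is_translation_number
    (φ : ℝ → ℝ) (hmono : StrictMono φ) (hcont : Continuous φ)
    (hsurj : Function.Surjective φ)
    (hper : ∀ θ : ℝ, φ (θ + 2 * π) = φ θ + 2 * π) :
    ∃ r : ℝ,
      Tendsto (fun n : ℕ => φ^[n] 0 / (2 * π * n)) atTop (𝓝 r) ∧
      Tendsto (fun n : ℕ =>
          (1 / (n : ℝ)) * ((1 / (4 * π ^ 2)) * ∫ θ in (0:ℝ)..(2 * π), (φ^[n] θ - θ)))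
        atTop (𝓝 r) :=
  homogenization_of_integral_quasimorphism_is_translation_number_general φ hmono hper
end

section
/- Define f(φ̃) = (1/(4π²))·∫₀^{2π} (φ̃(θ) − θ) dθ for increasing homeomorphisms φ̃ of ℝ satisfying φ̃(θ+2π) = φ̃(θ)+2π. Then for all such φ̃, ψ̃ one has |f(φ̃ ∘ ψ̃) − f(φ̃) − f(ψ̃)| < 2; i.e., f is a quasi-morphism on the group of lifts of orientation-preserving circle homeomorphisms. -/
open Real

/-!
The displacement `x ↦ φ x - x` of a monotone lift is periodic, and comparing `a` with the
translate of `b` lying in `(a - 2π, a]` shows that its oscillation is at most `2π`. The defect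
`f(φ ∘ ψ) - f(φ) - f(ψ)` is `1/(4π²)` times the integral over one period of the displacement at
`ψ θ` minus the displacement at `θ`, hence at most `1/(4π²) · 2π · 2π = 1`.
-/

/-- The quasi-morphism `f(φ) = (1/(4π²)) ∫₀^{2π} (φ(θ) - θ) dθ` on lifts of
orientation-preserving circle homeomorphisms. -/
noncomputable def liftAvg (φ : ℝ → ℝ) : ℝ :=
  (1 / (4 * π ^ 2)) * ∫ θ in (0:ℝ)..(2 * π), (φ θ - θ)

section Displacement

variable {φ : ℝ → ℝ} {T : ℝ}

theorem periodic_sub_id (hper : ∀ x, φ (x + T) = φ x + T) :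
    Function.Periodic (fun x => φ x - x) T := fun x => by
  simp only [hper]
  ring

theorem sub_id_sub_sub_id_le (hmono : Monotone φ) (hT : 0 < T)
    (hper : ∀ x, φ (x + T) = φ x + T) (a b : ℝ) : (φ a - a) - (φ b - b) ≤ T := by
  obtain ⟨y, ⟨hay, hya⟩, hby⟩ := (periodic_sub_id hper).exists_mem_Ioc hT b (a - T)
  have hφa : φ a ≤ φ y + T := hper y ▸ hmono (by linarith)
  rw [hby]
  linarith

theorem abs_sub_id_sub_sub_id_le (hmono : Monotone φ) (hT : 0 < T)
    (hper : ∀ x, φ (x + T) = φ x + T) (a b : ℝ) : |(φ a - a) - (φ b - b)| ≤ T :=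
  abs_sub_le_iff.2
    ⟨sub_id_sub_sub_id_le hmono hT hper a b, sub_id_sub_sub_id_le hmono hT hper b a⟩

end Displacement

theorem liftAvg_comp_sub_sub {φ ψ : ℝ → ℝ} (hφ : Monotone φ) (hψ : Monotone ψ) :
    liftAvg (φ ∘ ψ) - liftAvg φ - liftAvg ψ =
      (1 / (4 * π ^ 2)) * ∫ θ in (0:ℝ)..(2 * π), ((φ (ψ θ) - ψ θ) - (φ θ - θ)) := by
  have hsub_id : ∀ {u : ℝ → ℝ}, Monotone u →
      IntervalIntegrable (fun θ => u θ - θ) MeasureTheory.volume 0 (2 * π) :=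
    fun hu => hu.intervalIntegrable.sub (continuous_id.intervalIntegrable _ _)
  have hφψ := hsub_id (hφ.comp hψ)
  unfold liftAvg
  rw [← mul_sub, ← mul_sub, ← intervalIntegral.integral_sub hφψ (hsub_id hφ),
    ← intervalIntegral.integral_sub (hφψ.sub (hsub_id hφ)) (hsub_id hψ)]
  congr 1
  refine intervalIntegral.integral_congr fun θ _ => ?_
  simp only [Function.comp_apply]
  ring

theorem liftAvg_quasimorphism_general
    (φ ψ : ℝ → ℝ)
    (hφmono : StrictMono φ)
    (hφper : ∀ θ : ℝ, φ (θ + 2 * π) = φ θ + 2 * π)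
    (hψmono : StrictMono ψ) :
    |liftAvg (φ ∘ ψ) - liftAvg φ - liftAvg ψ| < 2 := by
  have h2π : (0:ℝ) < 2 * π := by positivity
  have hintegral : |∫ θ in (0:ℝ)..(2 * π), ((φ (ψ θ) - ψ θ) - (φ θ - θ))| ≤ 2 * π * (2 * π) := by
    simpa [abs_of_pos h2π] using intervalIntegral.norm_integral_le_of_norm_le_const
      (a := 0) (b := 2 * π)
      (f := fun θ => (φ (ψ θ) - ψ θ) - (φ θ - θ))
      fun θ _ => abs_sub_id_sub_sub_id_le hφmono.monotone h2π hφper (ψ θ) θ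
  rw [liftAvg_comp_sub_sub hφmono.monotone hψmono.monotone, abs_mul,
    abs_of_pos (by positivity : (0:ℝ) < 1 / (4 * π ^ 2))]
  calc 1 / (4 * π ^ 2) * |∫ θ in (0:ℝ)..(2 * π), ((φ (ψ θ) - ψ θ) - (φ θ - θ))|
      ≤ 1 / (4 * π ^ 2) * (2 * π * (2 * π)) := by gcongr
    _ = 1 := by field_simp; ring
    _ < 2 := by norm_num

/-- `f(φ) = (1/(4π²)) ∫₀^{2π} (φ(θ) - θ) dθ` is a quasi-morphism on
the group of lifts of orientation-preserving circle homeomorphisms: for all such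
lifts `φ, ψ`, `|f(φ ∘ ψ) - f(φ) - f(ψ)| < 2`. -/
theorem liftAvg_quasimorphism
    (φ ψ : ℝ → ℝ)
    (hφmono : StrictMono φ) (hφcont : Continuous φ) (hφsurj : Function.Surjective φ)
    (hφper : ∀ θ : ℝ, φ (θ + 2 * π) = φ θ + 2 * π)
    (hψmono : StrictMono ψ) (hψcont : Continuous ψ) (hψsurj : Function.Surjective ψ)
    (hψper : ∀ θ : ℝ, ψ (θ + 2 * π) = ψ θ + 2 * π) :
    |liftAvg (φ ∘ ψ) - liftAvg φ - liftAvg ψ| < 2 :=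
  liftAvg_quasimorphism_general φ ψ hφmono hφper hψmono
end

section
/- If (g_t)_{t∈[0,1]} and (g'_t)_{t∈[0,1]} are two smooth isotopies in Symp(D) with g_0 = g'_0 = id and the same endpoint g₁ = g'₁, then (2/π²)·(R((g_t)) − R((g'_t))) is an integer. Consequently (2/π²)·R descends to a well-defined map Symp(D) → ℝ/ℤ. -/
open MeasureTheory Filter Topology Set Function Real

noncomputable section

/-- The closed unit disk in `ℝ²`. -/
def disk : Set (ℝ × ℝ) := {p | p.1 ^ 2 + p.2 ^ 2 ≤ 1}

/-- The boundary circle of the unit disk. -/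
def bdry : Set (ℝ × ℝ) := {p | p.1 ^ 2 + p.2 ^ 2 = 1}

/-- Partial derivative in the `x`-direction. -/
def pdx (f : ℝ × ℝ → ℝ) (p : ℝ × ℝ) : ℝ := fderiv ℝ f p (1, 0)

/-- Partial derivative in the `y`-direction. -/
def pdy (f : ℝ × ℝ → ℝ) (p : ℝ × ℝ) : ℝ := fderiv ℝ f p (0, 1)

/-- The Jacobian determinant of a map `ℝ² → ℝ²`. -/
def jacDet (g : ℝ × ℝ → ℝ × ℝ) (p : ℝ × ℝ) : ℝ :=
  pdx (fun q => (g q).1) p * pdy (fun q => (g q).2) p -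
    pdy (fun q => (g q).1) p * pdx (fun q => (g q).2) p

/-- `g` represents an element of `Symp(D)`: a `C^∞` diffeomorphism of the closed
unit disk onto itself (smooth up to the boundary, i.e. the restriction of a
globally smooth map with globally smooth inverse on the disk) whose Jacobian
determinant is identically `1` on the disk. -/
def IsSymp (g : ℝ × ℝ → ℝ × ℝ) : Prop :=
  ContDiff ℝ (⊤ : ℕ∞) g ∧ MapsTo g disk disk ∧ (∀ p ∈ disk, jacDet g p = 1) ∧
    ∃ g' : ℝ × ℝ → ℝ × ℝ, ContDiff ℝ (⊤ : ℕ∞) g' ∧ MapsTo g' disk disk ∧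
      (∀ p ∈ disk, g' (g p) = p) ∧ (∀ p ∈ disk, g (g' p) = p)

/-- `g` represents an element of `G_o`: a symplectomorphism of the disk fixing the origin. -/
def IsSympO (g : ℝ × ℝ → ℝ × ℝ) : Prop :=
  IsSymp g ∧ g (0, 0) = (0, 0)

/-- `τ_λ(g) = ∫_D g*λ ∧ λ` for `λ = (x dy - y dx)/2`, written out in coordinates. -/
def tauL (g : ℝ × ℝ → ℝ × ℝ) : ℝ :=
  (1 / 4) * ∫ p in disk,
    (p.1 * ((g p).1 * pdx (fun q => (g q).2) p - (g p).2 * pdx (fun q => (g q).1) p) +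
     p.2 * ((g p).1 * pdy (fun q => (g q).2) p - (g p).2 * pdy (fun q => (g q).1) p))

/-- `σ(g) = ∫_γ (g*λ - λ)` along the radial path `γ(t) = (t,0)`, in coordinates. -/
def sigmaQ (g : ℝ × ℝ → ℝ × ℝ) : ℝ :=
  (1 / 2) * ∫ t in (0:ℝ)..1,
    ((g (t, 0)).1 * pdx (fun q => (g q).2) (t, 0) -
      (g (t, 0)).2 * pdx (fun q => (g q).1) (t, 0))

/-- `G` is a smooth isotopy in `Symp(D)` starting at the identity. -/
def IsIsotopy (G : ℝ → ℝ × ℝ → ℝ × ℝ) : Prop :=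
  ContDiff ℝ (⊤ : ℕ∞) (fun q : ℝ × (ℝ × ℝ) => G q.1 q.2) ∧
    (∀ t ∈ Icc (0:ℝ) 1, IsSymp (G t)) ∧ (∀ p ∈ disk, G 0 p = p)

/-- `f` is a family of Hamiltonian functions for the isotopy `G`, i.e.
`i_{X_t} ω = d f_t` where `X_t = (∂g_t/∂t) ∘ g_t⁻¹`; since `g_t` maps the disk
onto itself this is expressed at the points `G t p`, `p ∈ D`. -/
def IsHam (G : ℝ → ℝ × ℝ → ℝ × ℝ) (f : ℝ → ℝ × ℝ → ℝ) : Prop :=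
  ContDiff ℝ (⊤ : ℕ∞) (fun q : ℝ × (ℝ × ℝ) => f q.1 q.2) ∧
    ∀ t ∈ Icc (0:ℝ) 1, ∀ p ∈ disk,
      pdx (f t) (G t p) = -(deriv (fun s => G s p) t).2 ∧
      pdy (f t) (G t p) = (deriv (fun s => G s p) t).1

/-- `φ` is the lift of the boundary isotopy of `G`, with `φ 0 = id`. -/
def IsBoundaryLift (G : ℝ → ℝ × ℝ → ℝ × ℝ) (φ : ℝ → ℝ → ℝ) : Prop :=
  ContDiff ℝ (⊤ : ℕ∞) (fun q : ℝ × ℝ => φ q.1 q.2) ∧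
    (∀ t ∈ Icc (0:ℝ) 1, StrictMono (φ t) ∧ ∀ θ : ℝ, φ t (θ + 2 * π) = φ t θ + 2 * π) ∧
    (∀ θ : ℝ, φ 0 θ = θ) ∧
    (∀ t ∈ Icc (0:ℝ) 1, ∀ θ : ℝ,
      G t (Real.cos θ, Real.sin θ) = (Real.cos (φ t θ), Real.sin (φ t θ)))


/-! ## Auxiliary development -/


/-- The open unit disk. -/
def udisk : Set (ℝ × ℝ) := {p | p.1 ^ 2 + p.2 ^ 2 < 1}

lemma isClosed_disk : IsClosed disk :=
  isClosed_le (by fun_prop) continuous_const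

lemma measurableSet_disk : MeasurableSet disk := isClosed_disk.measurableSet

lemma isOpen_udisk : IsOpen udisk :=
  isOpen_lt (by fun_prop) continuous_const

lemma udisk_subset_disk : udisk ⊆ disk := by
  intro p hp
  show p.1 ^ 2 + p.2 ^ 2 ≤ 1
  exact le_of_lt hp

lemma isCompact_disk : IsCompact disk := by
  have h1 : disk ⊆ Icc (-1 : ℝ) 1 ×ˢ Icc (-1 : ℝ) 1 := by
    intro p hp
    have h := hp.out
    constructor <;> constructor <;> nlinarith [sq_nonneg p.1, sq_nonneg p.2]
  exact (isCompact_Icc.prod isCompact_Icc).of_isClosed_subset isClosed_disk h1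

lemma convex_disk : Convex ℝ disk := by
  intro p hp q hq a b ha hb hab
  have h1 : (a * p.1 + b * q.1) ^ 2 ≤ a * p.1 ^ 2 + b * q.1 ^ 2 := by
    nlinarith [mul_nonneg ha hb, sq_nonneg (p.1 - q.1)]
  have h2 : (a * p.2 + b * q.2) ^ 2 ≤ a * p.2 ^ 2 + b * q.2 ^ 2 := by
    nlinarith [mul_nonneg ha hb, sq_nonneg (p.2 - q.2)]
  have hp' := hp.out; have hq' := hq.out
  show (a • p + b • q).1 ^ 2 + (a • p + b • q).2 ^ 2 ≤ 1
  have e1 : (a • p + b • q).1 = a * p.1 + b * q.1 := rfl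
  have e2 : (a • p + b • q).2 = a * p.2 + b * q.2 := rfl
  rw [e1, e2]; nlinarith

lemma volume_diff_null : volume (disk \ udisk) = 0 := by
  have h1 : disk \ udisk ⊆ frontier disk := by
    intro p hp
    rw [frontier, isClosed_disk.closure_eq]
    refine ⟨hp.1, fun hmem => hp.2 ?_⟩
    -- p in interior of disk implies p in udisk
    by_contra hu
    have hpb : p.1 ^ 2 + p.2 ^ 2 = 1 := le_antisymm hp.1 (not_lt.1 hu)
    obtain ⟨ε, hε, hball⟩ := Metric.isOpen_iff.1 isOpen_interior p hmem
    have hkey : ∀ δ : ℝ, 0 < δ → δ < ε → (1 + δ) • p ∈ disk := by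
      intro δ hδ hδε
      apply interior_subset; apply hball
      rw [Metric.mem_ball, dist_eq_norm]
      have : (1 + δ) • p - p = δ • p := by module
      rw [this]
      have hn : ‖p‖ ≤ 1 := by
        rw [Prod.norm_def]
        have h1 : |p.1| ≤ 1 := by rw [abs_le]; constructor <;> nlinarith [sq_nonneg p.2]
        have h2 : |p.2| ≤ 1 := by rw [abs_le]; constructor <;> nlinarith [sq_nonneg p.1]
        simp [Real.norm_eq_abs]; exact ⟨h1, h2⟩
      calc ‖δ • p‖ = δ * ‖p‖ := by rw [norm_smul, Real.norm_eq_abs, abs_of_pos hδ]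
        _ ≤ δ * 1 := by nlinarith
        _ < ε := by nlinarith
    obtain ⟨δ, hδ1, hδ2⟩ := exists_between (half_pos hε)
    have hd : (1 + δ) • p ∈ disk := hkey δ hδ1 (lt_trans hδ2 (half_lt_self hε))
    have : ((1 + δ) • p).1 ^ 2 + ((1 + δ) • p).2 ^ 2 = (1 + δ) ^ 2 := by
      have e1 : ((1 + δ) • p).1 = (1 + δ) * p.1 := rfl
      have e2 : ((1 + δ) • p).2 = (1 + δ) * p.2 := rfl
      rw [e1, e2]; nlinarith
    have := hd.out
    nlinarith
  exact measure_mono_null h1 (convex_disk.addHaar_frontier volume)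

lemma smul_mem_disk {p : ℝ × ℝ} (hp : p ∈ disk) {u : ℝ} (hu0 : 0 ≤ u) (hu1 : u ≤ 1) :
    u • p ∈ disk := by
  have e1 : (u • p).1 = u * p.1 := rfl
  have e2 : (u • p).2 = u * p.2 := rfl
  have := hp.out
  show (u • p).1 ^ 2 + (u • p).2 ^ 2 ≤ 1
  rw [e1, e2]
  have hu2 : u ^ 2 ≤ 1 := by nlinarith
  have hs : 0 ≤ p.1 ^ 2 + p.2 ^ 2 := by positivity
  calc (u * p.1) ^ 2 + (u * p.2) ^ 2 = u ^ 2 * (p.1 ^ 2 + p.2 ^ 2) := by ring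
    _ ≤ 1 * 1 := by nlinarith
    _ = 1 := by ring

section glue

variable {F : Type*} [NormedAddCommGroup F] [NormedSpace ℝ F]

/-- time-derivative of a two-parameter family, via the joint fderiv. -/
def tder (H : ℝ × (ℝ × ℝ) → F) (s : ℝ) (q : ℝ × ℝ) : F :=
  fderiv ℝ H (s, q) (1, 0)

lemma hasDerivAt_tslice {H : ℝ × (ℝ × ℝ) → F} (hH : Differentiable ℝ H)
    (s : ℝ) (q : ℝ × ℝ) : HasDerivAt (fun s' => H (s', q)) (tder H s q) s := by
  have h1 : HasDerivAt (fun s' : ℝ => (s', q)) ((1 : ℝ), (0 : ℝ × ℝ)) s := by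
    have := (hasDerivAt_id s).prodMk (hasDerivAt_const s q)
    simpa using this
  exact (hH (s, q)).hasFDerivAt.comp_hasDerivAt s h1

/-- `u`-derivative along the ray `u ↦ u • p`, at fixed time. -/
lemma hasDerivAt_uslice {H : ℝ × (ℝ × ℝ) → F} (hH : Differentiable ℝ H)
    (s : ℝ) (p : ℝ × ℝ) (u : ℝ) :
    HasDerivAt (fun u' => H (s, u' • p)) (fderiv ℝ H (s, u • p) (0, p)) u := by
  have h1 : HasDerivAt (fun u' : ℝ => ((s : ℝ), u' • p)) ((0 : ℝ), p) u := by
    have h2 : HasDerivAt (fun u' : ℝ => u' • p) p u := by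
      simpa using (hasDerivAt_id u).smul_const p
    simpa using (hasDerivAt_const u s).prodMk h2
  exact (hH (s, u • p)).hasFDerivAt.comp_hasDerivAt u h1

/-- applying a CLM `ℝ×ℝ →L ℝ` to a vector, coordinatewise. -/
lemma clm_apply_decomp (L : ℝ × ℝ →L[ℝ] ℝ) (v : ℝ × ℝ) :
    L v = v.1 * L (1, 0) + v.2 * L (0, 1) := by
  have : v = v.1 • ((1 : ℝ), (0 : ℝ)) + v.2 • ((0 : ℝ), (1 : ℝ)) := by
    ext <;> simp
  rw [this, map_add, L.map_smul, L.map_smul]; simp [smul_eq_mul]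

/-- Clairaut/Schwarz symmetry for directional second derivatives. -/
lemma fderiv_fderiv_symm {E : Type*} [NormedAddCommGroup E] [NormedSpace ℝ E]
    {H : E → F} (hH : ContDiff ℝ (⊤ : ℕ∞) H) (z : E) (w₁ w₂ : E) :
    fderiv ℝ (fun z' => fderiv ℝ H z' w₂) z w₁ =
      fderiv ℝ (fun z' => fderiv ℝ H z' w₁) z w₂ := by
  have hd : ContDiff ℝ 1 (fderiv ℝ H) := hH.fderiv_right (WithTop.coe_le_coe.2 le_top)
  have hd1 : DifferentiableAt ℝ (fderiv ℝ H) z := hd.differentiable (by norm_num) z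
  have key : ∀ w v : E, fderiv ℝ (fun z' => fderiv ℝ H z' w) z v =
      (fderiv ℝ (fderiv ℝ H) z v) w := by
    intro w v
    have := fderiv_clm_apply (x := z) (c := fderiv ℝ H) (u := fun _ => w)
      hd1 (differentiableAt_const w)
    rw [this]
    simp
  rw [key, key]
  exact (second_derivative_symmetric
    (fun y => ((hH.differentiable (by simp)) y).hasFDerivAt) hd1.hasFDerivAt w₂ w₁).symm

end glue

/-! ### Determinant of a CLM on `ℝ × ℝ` -/

lemma clm_det_eq (L : ℝ × ℝ →L[ℝ] ℝ × ℝ) :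
    L.det = (L (1, 0)).1 * (L (0, 1)).2 - (L (1, 0)).2 * (L (0, 1)).1 := by
  classical
  set b := Module.Basis.finTwoProd ℝ
  set M : Matrix (Fin 2) (Fin 2) ℝ :=
    !![(L (1, 0)).1, (L (0, 1)).1; (L (1, 0)).2, (L (0, 1)).2] with hM
  have hLb : (L : ℝ × ℝ →ₗ[ℝ] ℝ × ℝ) = Matrix.toLin b b M := by
    apply b.ext
    intro i
    fin_cases i <;>
      · rw [Matrix.toLin_self]
        simp [b, Module.Basis.finTwoProd_zero, Module.Basis.finTwoProd_one, Fin.sum_univ_two, M]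
  have : L.det = LinearMap.det (Matrix.toLin b b M) := by
    rw [ContinuousLinearMap.det, hLb]
  rw [this, LinearMap.det_toLin, Matrix.det_fin_two]
  simp [M]
  ring


lemma fderiv_comp_fst {g : ℝ × ℝ → ℝ × ℝ} (hg : DifferentiableAt ℝ g p) (v : ℝ × ℝ) :
    fderiv ℝ (fun q => (g q).1) p v = (fderiv ℝ g p v).1 := by
  rw [(hg.hasFDerivAt.fst).fderiv]; rfl

lemma fderiv_comp_snd {g : ℝ × ℝ → ℝ × ℝ} (hg : DifferentiableAt ℝ g p) (v : ℝ × ℝ) :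
    fderiv ℝ (fun q => (g q).2) p v = (fderiv ℝ g p v).2 := by
  rw [(hg.hasFDerivAt.snd).fderiv]; rfl

/-- jacDet is the determinant of the Fréchet derivative. -/
lemma jacDet_eq_det {g : ℝ × ℝ → ℝ × ℝ} (hg : DifferentiableAt ℝ g p) :
    jacDet g p = (fderiv ℝ g p).det := by
  rw [clm_det_eq]
  unfold jacDet pdx pdy
  rw [fderiv_comp_fst hg, fderiv_comp_fst hg, fderiv_comp_snd hg, fderiv_comp_snd hg]
  ring

/-- Openness of images of the open disk under a map with invertible derivative there. -/
lemma isOpen_image_of_invertible_deriv {g' : ℝ × ℝ → ℝ × ℝ} (hg' : ContDiff ℝ (⊤ : ℕ∞) g')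
    (hinv : ∀ q ∈ udisk, ∃ L : ℝ × ℝ →L[ℝ] ℝ × ℝ, L.comp (fderiv ℝ g' q) =
      ContinuousLinearMap.id ℝ (ℝ × ℝ)) :
    IsOpen (g' '' udisk) := by
  rw [isOpen_iff_mem_nhds]
  rintro a ⟨q, hq, rfl⟩
  obtain ⟨L, hL⟩ := hinv q hq
  -- fderiv g' q is a linear equivalence
  set D := fderiv ℝ g' q with hD
  have hinj0 : Function.Injective D := by
    intro x y hxy
    have h1 : (L.comp D) x = (L.comp D) y := by
      simp only [ContinuousLinearMap.comp_apply, hxy]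
    rw [hL] at h1; simpa using h1
  have hinj : Function.Injective (D : ℝ × ℝ →ₗ[ℝ] ℝ × ℝ) := hinj0
  have hbij : Function.Bijective (D : ℝ × ℝ →ₗ[ℝ] ℝ × ℝ) :=
    ⟨hinj, (LinearMap.injective_iff_surjective).1 hinj⟩
  set E := LinearEquiv.ofBijective (D : ℝ × ℝ →ₗ[ℝ] ℝ × ℝ) hbij
  set E' := E.toContinuousLinearEquiv
  have hE' : (E' : ℝ × ℝ →L[ℝ] ℝ × ℝ) = D := ContinuousLinearMap.ext fun v => rfl
  have hstrict : HasStrictFDerivAt g' (E' : ℝ × ℝ →L[ℝ] ℝ × ℝ) q := by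
    apply (hg'.contDiffAt).hasStrictFDerivAt'
    · rw [hE']
      exact (hg'.differentiable (by simp) q).hasFDerivAt
    · simp
  have hmap := hstrict.map_nhds_eq_of_equiv
  rw [← hmap]
  exact image_mem_map (isOpen_udisk.mem_nhds hq)

/-- A symplectomorphism of the disk maps the boundary circle into itself. -/
lemma isSymp_maps_bdry {g : ℝ × ℝ → ℝ × ℝ} (hg : IsSymp g) :
    ∀ p ∈ bdry, g p ∈ bdry := by
  obtain ⟨hgs, hgm, hgj, g', hg's, hg'm, hleft, hright⟩ := hg
  intro p hp
  have hpd : p ∈ disk := le_of_eq hp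
  have hgpd : g p ∈ disk := hgm hpd
  by_contra hne
  have hgu : g p ∈ udisk := lt_of_le_of_ne hgpd.out (fun h => hne h)
  -- invertibility of fderiv g' on udisk
  have hinv : ∀ q ∈ udisk, ∃ L : ℝ × ℝ →L[ℝ] ℝ × ℝ, L.comp (fderiv ℝ g' q) =
      ContinuousLinearMap.id ℝ (ℝ × ℝ) := by
    intro q hq
    refine ⟨fderiv ℝ g (g' q), ?_⟩
    have hcomp : fderiv ℝ (g ∘ g') q = (fderiv ℝ g (g' q)).comp (fderiv ℝ g' q) :=
      fderiv_comp q (hgs.differentiable (by simp) (g' q)) (hg's.differentiable (by simp) q)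
    rw [← hcomp]
    have hev : g ∘ g' =ᶠ[𝓝 q] id := by
      filter_upwards [isOpen_udisk.mem_nhds hq] with x hx
      exact hright x (udisk_subset_disk hx)
    rw [hev.fderiv_eq, fderiv_id]
  have hopen := isOpen_image_of_invertible_deriv hg's hinv
  have hmem : p ∈ g' '' udisk := ⟨g p, hgu, hleft p hpd⟩
  -- an open subset of the disk cannot contain a boundary point
  have hsub : g' '' udisk ⊆ disk := by
    rintro x ⟨y, hy, rfl⟩; exact hg'm (udisk_subset_disk hy)
  obtain ⟨ε, hε, hball⟩ := Metric.isOpen_iff.1 hopen p hmem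
  -- the point (1+δ)•p is in the ball but not in the disk
  have hn1 : ‖p‖ ≤ 1 := by
    have h := hp.out
    rw [Prod.norm_def]
    have h1 : |p.1| ≤ 1 := by rw [abs_le]; constructor <;> nlinarith [sq_nonneg p.2]
    have h2 : |p.2| ≤ 1 := by rw [abs_le]; constructor <;> nlinarith [sq_nonneg p.1]
    simp [Real.norm_eq_abs]; exact ⟨h1, h2⟩
  obtain ⟨δ, hδ1, hδ2⟩ := exists_between (half_pos hε)
  have hδε : δ < ε := lt_trans hδ2 (half_lt_self hε)
  have hin : (1 + δ) • p ∈ Metric.ball p ε := by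
    rw [Metric.mem_ball, dist_eq_norm]
    have e : (1 + δ) • p - p = δ • p := by module
    rw [e, norm_smul, Real.norm_eq_abs, abs_of_pos hδ1]
    nlinarith
  have hind : (1 + δ) • p ∈ disk := hsub (hball hin)
  have : ((1 + δ) • p).1 ^ 2 + ((1 + δ) • p).2 ^ 2 ≤ 1 := hind.out
  have e1 : ((1 + δ) • p).1 = (1 + δ) * p.1 := rfl
  have e2 : ((1 + δ) • p).2 = (1 + δ) * p.2 := rfl
  rw [e1, e2] at this
  have hb : p.1 ^ 2 + p.2 ^ 2 = 1 := hp.out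
  have e : ((1 + δ) * p.1) ^ 2 + ((1 + δ) * p.2) ^ 2 = (1 + δ) ^ 2 * (p.1 ^ 2 + p.2 ^ 2) := by
    ring
  rw [e, hb, mul_one] at this
  nlinarith


lemma polar_symm_apply (q : ℝ × ℝ) :
    polarCoord.symm q = (q.1 * Real.cos q.2, q.1 * Real.sin q.2) := rfl

/-- Integration over the closed unit disk in polar coordinates. -/
lemma disk_polar (V : ℝ × ℝ → ℝ) (hV : Continuous V) :
    ∫ p in disk, V p =
      ∫ θ in Ioo (-π) π, ∫ r in Ioc (0:ℝ) 1, r * V (r * Real.cos θ, r * Real.sin θ) := by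
  set J : ℝ × ℝ → ℝ := fun q => q.1 * V (q.1 * Real.cos q.2, q.1 * Real.sin q.2) with hJ
  have hJc : Continuous J := by fun_prop
  set A : Set (ℝ × ℝ) := Ioc (0:ℝ) 1 ×ˢ (univ : Set ℝ) with hA
  have hAm : MeasurableSet A := measurableSet_Ioc.prod MeasurableSet.univ
  set K : ℝ × ℝ → ℝ := A.indicator J with hK
  -- step 1: to indicator
  rw [← integral_indicator measurableSet_disk]
  -- step 2: polar change of variables
  rw [← integral_comp_polarCoord_symm (disk.indicator V)]
  -- step 3: identify integrand on the target with K
  have hcongr : ∀ q ∈ polarCoord.target, q.1 • (disk.indicator V) (polarCoord.symm q) = K q := by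
    rintro ⟨r, θ⟩ hq
    rw [polarCoord_target] at hq
    have hr : 0 < r := hq.1
    have hmem : polarCoord.symm (r, θ) ∈ disk ↔ r ≤ 1 := by
      rw [polar_symm_apply]
      show (r * Real.cos θ) ^ 2 + (r * Real.sin θ) ^ 2 ≤ 1 ↔ r ≤ 1
      have e : (r * Real.cos θ) ^ 2 + (r * Real.sin θ) ^ 2 = r ^ 2 := by
        have := sin_sq_add_cos_sq θ; nlinarith [this]
      rw [e]
      constructor
      · intro h; nlinarith
      · intro h; nlinarith
    have hmem2 : (r, θ) ∈ A ↔ r ≤ 1 := by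
      simp [hA, mem_prod, hr]
    by_cases hle : r ≤ 1
    · rw [hK, indicator_of_mem (hmem2.2 hle), indicator_of_mem (hmem.2 hle), hJ]
      simp [polar_symm_apply, smul_eq_mul]
    · rw [hK, indicator_of_notMem (fun h => hle (hmem2.1 h)),
        indicator_of_notMem (fun h => hle (hmem.1 h))]
      simp
  rw [setIntegral_congr_fun polarCoord.open_target.measurableSet hcongr]
  -- step 4: iterated integral
  rw [polarCoord_target]
  have hKint : IntegrableOn K (Ioi (0:ℝ) ×ˢ Ioo (-π) π) := by
    rw [IntegrableOn, hK, integrable_indicator_iff hAm, IntegrableOn,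
      Measure.restrict_restrict hAm]
    apply MeasureTheory.Integrable.mono_measure
      (ν := volume.restrict (Icc (0:ℝ) 1 ×ˢ Icc (-π) π))
    · exact hJc.continuousOn.integrableOn_compact (isCompact_Icc.prod isCompact_Icc)
    · apply Measure.restrict_mono _ le_rfl
      rintro ⟨r, θ⟩ ⟨h1, h2⟩
      exact ⟨⟨le_of_lt h1.1.1, h1.1.2⟩, ⟨le_of_lt h2.2.1, le_of_lt h2.2.2⟩⟩
  have hswap : ∫ q in Ioi (0:ℝ) ×ˢ Ioo (-π) π, K q =
      ∫ θ in Ioo (-π) π, ∫ r in Ioi (0:ℝ), K (r, θ) := by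
    rw [Measure.volume_eq_prod] at hKint ⊢
    rw [setIntegral_prod _ hKint]
    apply integral_integral_swap
    rwa [Measure.prod_restrict, ← IntegrableOn]
  rw [hswap]
  -- step 5: inner integral
  apply setIntegral_congr_fun measurableSet_Ioo
  intro θ _
  have : ∀ r : ℝ, K (r, θ) = (Ioc (0:ℝ) 1).indicator (fun r' => J (r', θ)) r := by
    intro r
    rw [hK, indicator_apply, indicator_apply]
    simp [hA, mem_prod]
  simp_rw [this]
  rw [setIntegral_indicator measurableSet_Ioc,
    inter_eq_self_of_subset_right Ioc_subset_Ioi_self]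


lemma continuous_pdx {f : ℝ × ℝ → ℝ} (hf : ContDiff ℝ (⊤ : ℕ∞) f) : Continuous (pdx f) := by
  have := hf.continuous_fderiv_apply (n := (⊤ : ℕ∞)) (by simp)
  exact this.comp (continuous_id.prodMk continuous_const)

lemma continuous_pdy {f : ℝ × ℝ → ℝ} (hf : ContDiff ℝ (⊤ : ℕ∞) f) : Continuous (pdy f) := by
  have := hf.continuous_fderiv_apply (n := (⊤ : ℕ∞)) (by simp)
  exact this.comp (continuous_id.prodMk continuous_const)

/-- Integration by parts / divergence identity on the closed unit disk. -/
lemma disk_ibp (Ff : ℝ × ℝ → ℝ) (hFf : ContDiff ℝ (⊤ : ℕ∞) Ff) (hbd : ∀ p ∈ bdry, Ff p = 0) :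
    ∫ p in disk, (p.1 * pdx Ff p + p.2 * pdy Ff p + 2 * Ff p) = 0 := by
  set V : ℝ × ℝ → ℝ := fun p => p.1 * pdx Ff p + p.2 * pdy Ff p + 2 * Ff p with hV
  have hVc : Continuous V := by
    apply Continuous.add
    apply Continuous.add
    · exact continuous_fst.mul (continuous_pdx hFf)
    · exact continuous_snd.mul (continuous_pdy hFf)
    · exact continuous_const.mul hFf.continuous
  rw [disk_polar V hVc]
  have hzero : ∀ θ ∈ Ioo (-π) π,
      ∫ r in Ioc (0:ℝ) 1, r * V (r * Real.cos θ, r * Real.sin θ) = 0 := by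
    intro θ _
    set c := Real.cos θ
    set s := Real.sin θ
    set W : ℝ → ℝ := fun r => r ^ 2 * Ff (r * c, r * s) with hW
    have hderiv : ∀ r : ℝ, HasDerivAt W (r * V (r * c, r * s)) r := by
      intro r
      have hcurve : HasDerivAt (fun r' : ℝ => ((r' * c, r' * s) : ℝ × ℝ)) (c, s) r := by
        have h1 : HasDerivAt (fun r' : ℝ => r' * c) c r := by
          simpa using (hasDerivAt_id r).mul_const c
        have h2 : HasDerivAt (fun r' : ℝ => r' * s) s r := by
          simpa using (hasDerivAt_id r).mul_const s
        exact h1.prodMk h2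
      have hFd : HasDerivAt (fun r' : ℝ => Ff (r' * c, r' * s))
          (fderiv ℝ Ff (r * c, r * s) (c, s)) r :=
        (hFf.differentiable (by simp) _).hasFDerivAt.comp_hasDerivAt r hcurve
      have hsq : HasDerivAt (fun r' : ℝ => r' ^ 2) (2 * r) r := by
        simpa using (hasDerivAt_pow 2 r)
      have := hsq.mul hFd
      refine this.congr_deriv ?_
      rw [clm_apply_decomp]
      simp only [hV]
      unfold pdx pdy
      ring
    have hcont : Continuous fun r : ℝ => r * V (r * c, r * s) := by
      apply continuous_id.mul
      exact hVc.comp (by fun_prop)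
    rw [← intervalIntegral.integral_of_le (zero_le_one)]
    rw [intervalIntegral.integral_eq_sub_of_hasDerivAt (fun r _ => hderiv r)
      (hcont.intervalIntegrable 0 1)]
    have h1 : W 1 = 0 := by
      have hb : ((c, s) : ℝ × ℝ) ∈ bdry := by
        show c ^ 2 + s ^ 2 = 1
        rw [add_comm]; exact sin_sq_add_cos_sq θ
      have := hbd _ hb
      simp [hW, this]
    have h0 : W 0 = 0 := by simp [hW]
    rw [h1, h0, sub_zero]
  rw [setIntegral_congr_fun measurableSet_Ioo hzero]
  simp

/-- The area of the unit disk is `π`. -/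
lemma area_disk : ∫ (_ : ℝ × ℝ) in disk, (1 : ℝ) = π := by
  rw [disk_polar _ continuous_const]
  have h1 : ∀ θ ∈ Ioo (-π) π, ∫ r in Ioc (0:ℝ) 1, r * (1:ℝ) = (1:ℝ)/2 := by
    intro θ _
    rw [← intervalIntegral.integral_of_le (zero_le_one)]
    simp
  rw [setIntegral_congr_fun measurableSet_Ioo h1]
  rw [setIntegral_const]
  simp [Real.volume_Ioo]
  rw [max_eq_left (by positivity)]
  ring


lemma ae_udisk_of_disk : ∀ᵐ x : ℝ × ℝ, x ∈ disk → x ∈ udisk := by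
  rw [ae_iff]
  refine measure_mono_null ?_ volume_diff_null
  intro x hx
  simp only [mem_setOf_eq, Classical.not_imp] at hx
  exact ⟨hx.1, hx.2⟩

/-- Change of variables: an area-preserving diffeomorphism of the disk
preserves integrals over the disk. -/
lemma symp_change_of_variables
    {g g' : ℝ × ℝ → ℝ × ℝ} (hgs : ContDiff ℝ (⊤ : ℕ∞) g) (hg's : ContDiff ℝ (⊤ : ℕ∞) g')
    (hgm : MapsTo g disk disk) (hg'm : MapsTo g' disk disk)
    (hleft : ∀ p ∈ disk, g' (g p) = p) (hright : ∀ p ∈ disk, g (g' p) = p)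
    (hgj : ∀ p ∈ disk, jacDet g p = 1) (Φ : ℝ × ℝ → ℝ) :
    ∫ p in disk, Φ p = ∫ q in disk, Φ (g' q) := by
  have himg : g' '' disk = disk := by
    apply Subset.antisymm
    · rintro x ⟨y, hy, rfl⟩; exact hg'm hy
    · intro q hq; exact ⟨g q, hgm hq, hleft q hq⟩
  have hder : ∀ x ∈ disk, HasFDerivWithinAt g' (fderiv ℝ g' x) disk x := fun x _ =>
    ((hg's.differentiable (by simp) x).hasFDerivAt).hasFDerivWithinAt
  have hinj : InjOn g' disk := by
    intro a ha b hb hab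
    have := congrArg g hab
    rwa [hright a ha, hright b hb] at this
  have hcov := integral_image_eq_integral_abs_det_fderiv_smul volume measurableSet_disk
    hder hinj Φ
  rw [himg] at hcov
  rw [hcov]
  apply setIntegral_congr_ae measurableSet_disk
  filter_upwards [ae_udisk_of_disk] with q hq hqd
  have hqu : q ∈ udisk := hq hqd
  -- determinant of fderiv g' is 1 on the open disk
  have hgq : g' q ∈ disk := hg'm hqd
  have hcompeq : fderiv ℝ (g ∘ g') q = ContinuousLinearMap.id ℝ (ℝ × ℝ) := by
    have hev : g ∘ g' =ᶠ[𝓝 q] id := by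
      filter_upwards [isOpen_udisk.mem_nhds hqu] with x hx
      exact hright x (udisk_subset_disk hx)
    rw [hev.fderiv_eq, fderiv_id]
  have hcomp : fderiv ℝ (g ∘ g') q = (fderiv ℝ g (g' q)).comp (fderiv ℝ g' q) :=
    fderiv_comp q (hgs.differentiable (by simp) (g' q)) (hg's.differentiable (by simp) q)
  have hdet : (fderiv ℝ g (g' q)).det * (fderiv ℝ g' q).det = 1 := by
    have := congrArg ContinuousLinearMap.det (hcomp.symm.trans hcompeq)
    rwa [ContinuousLinearMap.det, ContinuousLinearMap.toLinearMap_comp, LinearMap.det_comp,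
      ContinuousLinearMap.det, ContinuousLinearMap.coe_id, LinearMap.det_id] at this
  have hdg : (fderiv ℝ g (g' q)).det = 1 := by
    rw [← jacDet_eq_det (hgs.differentiable (by simp) (g' q))]
    exact hgj (g' q) hgq
  rw [hdg, one_mul] at hdet
  rw [hdet]
  simp


/-- Lifting lemma: a smooth path on the unit circle starting at `(1,0)` is
`exp(i α(s))` where `α` is the integral of the angular速 form. -/
lemma circle_lift {γ γ' : ℝ → ℝ × ℝ} (hγ : ∀ s, HasDerivAt γ (γ' s) s)
    (hγ'c : Continuous γ') (hγc : Continuous γ)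
    (hcirc : ∀ s ∈ Icc (0:ℝ) 1, ((γ s).1) ^ 2 + ((γ s).2) ^ 2 = 1)
    (h0 : γ 0 = (1, 0)) :
    Complex.exp ((∫ s in (0:ℝ)..1, ((γ s).1 * (γ' s).2 - (γ s).2 * (γ' s).1)) * Complex.I)
      = Complex.ofReal (γ 1).1 + Complex.ofReal (γ 1).2 * Complex.I := by
  set κ : ℝ → ℝ := fun s => (γ s).1 * (γ' s).2 - (γ s).2 * (γ' s).1 with hκ
  have hκc : Continuous κ := by fun_prop
  set α : ℝ → ℝ := fun s => ∫ t in (0:ℝ)..s, κ t with hα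
  have hαd : ∀ s : ℝ, HasDerivAt α (κ s) s := by
    intro s
    exact intervalIntegral.integral_hasDerivAt_right
      (hκc.intervalIntegrable 0 s)
      (hκc.stronglyMeasurable.stronglyMeasurableAtFilter)
      hκc.continuousAt
  set z : ℝ → ℂ := fun s => Complex.ofReal (γ s).1 + Complex.ofReal (γ s).2 * Complex.I
    with hz
  set w : ℝ → ℂ := fun s => z s * Complex.exp (-Complex.ofReal (α s) * Complex.I) with hw
  -- component derivatives
  have h1 : ∀ s : ℝ, HasDerivAt (fun s' => (γ s').1) (γ' s).1 s := by
    intro s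
    exact (ContinuousLinearMap.fst ℝ ℝ ℝ).hasFDerivAt.comp_hasDerivAt s (hγ s)
  have h2 : ∀ s : ℝ, HasDerivAt (fun s' => (γ s').2) (γ' s).2 s := by
    intro s
    exact (ContinuousLinearMap.snd ℝ ℝ ℝ).hasFDerivAt.comp_hasDerivAt s (hγ s)
  have hzd : ∀ s : ℝ, HasDerivAt z
      (Complex.ofReal (γ' s).1 + Complex.ofReal (γ' s).2 * Complex.I) s := by
    intro s
    exact ((h1 s).ofReal_comp).add (((h2 s).ofReal_comp).mul_const Complex.I)
  have hexpd : ∀ s : ℝ, HasDerivAt (fun s' => Complex.exp (-Complex.ofReal (α s') * Complex.I))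
      (Complex.exp (-Complex.ofReal (α s) * Complex.I) * (-Complex.ofReal (κ s) * Complex.I))
      s := by
    intro s
    have hin : HasDerivAt (fun s' => -Complex.ofReal (α s') * Complex.I)
        (-Complex.ofReal (κ s) * Complex.I) s :=
      (((hαd s).ofReal_comp).neg).mul_const Complex.I
    exact hin.cexp
  have hwd : ∀ s : ℝ, HasDerivAt w
      ((Complex.ofReal (γ' s).1 + Complex.ofReal (γ' s).2 * Complex.I)
          * Complex.exp (-Complex.ofReal (α s) * Complex.I)
        + z s * (Complex.exp (-Complex.ofReal (α s) * Complex.I)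
          * (-Complex.ofReal (κ s) * Complex.I))) s := by
    intro s
    exact (hzd s).mul (hexpd s)
  -- the derivative vanishes on [0,1]
  have hzero : ∀ s ∈ Icc (0:ℝ) 1, HasDerivWithinAt w 0 (Icc (0:ℝ) 1) s := by
    intro s hs
    -- radial derivative identity
    have hn : ((γ s).1) ^ 2 + ((γ s).2) ^ 2 = 1 := hcirc s hs
    have he : (γ s).1 * (γ' s).1 + (γ s).2 * (γ' s).2 = 0 := by
      have hnd : HasDerivAt (fun s' => ((γ s').1) ^ 2 + ((γ s').2) ^ 2)
          (2 * (γ s).1 * (γ' s).1 + 2 * (γ s).2 * (γ' s).2) s := by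
        have := (((h1 s).pow 2).add ((h2 s).pow 2))
        refine this.congr_deriv ?_
        norm_num
      have hw1 : HasDerivWithinAt (fun s' => ((γ s').1) ^ 2 + ((γ s').2) ^ 2)
          (2 * (γ s).1 * (γ' s).1 + 2 * (γ s).2 * (γ' s).2) (Icc (0:ℝ) 1) s :=
        hnd.hasDerivWithinAt
      have hw2 : HasDerivWithinAt (fun s' => ((γ s').1) ^ 2 + ((γ s').2) ^ 2)
          0 (Icc (0:ℝ) 1) s := by
        apply (hasDerivWithinAt_const s (Icc (0:ℝ) 1) (1:ℝ)).congr
        · intro y hy; exact hcirc y hy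
        · exact hcirc s hs
      have huniq := uniqueDiffOn_Icc (by norm_num : (0:ℝ) < 1) s hs
      have := hw1.derivWithin huniq ▸ hw2.derivWithin huniq
      linarith [hw1.derivWithin huniq, hw2.derivWithin huniq]
    have hrel1 : (γ' s).1 = -(κ s * (γ s).2) := by
      rw [hκ]
      linear_combination (γ s).1 * he - (γ' s).1 * hn
    have hrel2 : (γ' s).2 = κ s * (γ s).1 := by
      rw [hκ]
      linear_combination (γ s).2 * he - (γ' s).2 * hn
    have hval : (Complex.ofReal (γ' s).1 + Complex.ofReal (γ' s).2 * Complex.I)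
          * Complex.exp (-Complex.ofReal (α s) * Complex.I)
        + z s * (Complex.exp (-Complex.ofReal (α s) * Complex.I)
          * (-Complex.ofReal (κ s) * Complex.I)) = 0 := by
      have hzrel : (Complex.ofReal (γ' s).1 + Complex.ofReal (γ' s).2 * Complex.I)
          = Complex.ofReal (κ s) * Complex.I * z s := by
        rw [hrel1, hrel2, hz]
        push_cast
        ring_nf
        rw [Complex.I_sq]
        ring
      rw [hzrel]
      ring
    rw [← hval]
    exact (hwd s).hasDerivWithinAt
  -- w is constant on [0,1]
  have hconst : w 1 = w 0 := by
    have := Convex.norm_image_sub_le_of_norm_hasDerivWithin_le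
      (f := w) (f' := fun _ => 0) (C := 0)
      (fun x hx => hzero x hx) (fun x _ => by simp) (convex_Icc 0 1)
      (left_mem_Icc.2 zero_le_one) (right_mem_Icc.2 zero_le_one)
    have h2 : ‖w 1 - w 0‖ ≤ 0 := by simpa using this
    have h3 : ‖w 1 - w 0‖ = 0 := le_antisymm h2 (norm_nonneg _)
    rwa [norm_sub_eq_zero_iff] at h3
  have hw0 : w 0 = 1 := by
    rw [hw, hz]
    simp [hα, intervalIntegral.integral_same, h0]
  rw [hw0] at hconst
  -- unravel: z 1 = exp(α 1 * I)
  have hexp_ne : Complex.exp (-Complex.ofReal (α 1) * Complex.I) ≠ 0 := Complex.exp_ne_zero _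
  have hz1 : z 1 = Complex.exp (Complex.ofReal (α 1) * Complex.I) := by
    have h := hconst
    rw [hw] at h
    have : z 1 = (Complex.exp (-Complex.ofReal (α 1) * Complex.I))⁻¹ := by
      field_simp at h ⊢
      linear_combination h
    rw [this, ← Complex.exp_neg]
    ring_nf
  rw [hα] at hz1
  rw [hz, hκ] at hz1
  exact hz1.symm


section key

variable (G : ℝ → ℝ × ℝ → ℝ × ℝ) (f : ℝ → ℝ × ℝ → ℝ)

/-- the isotopy as a joint function -/
def Ghat : ℝ × (ℝ × ℝ) → ℝ × ℝ := fun q => G q.1 q.2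

/-- the Hamiltonian family as a joint function -/
def fhat : ℝ × (ℝ × ℝ) → ℝ := fun q => f q.1 q.2

/-- time derivative of the isotopy -/
def gdot (s : ℝ) (q : ℝ × ℝ) : ℝ × ℝ := fderiv ℝ (Ghat G) (s, q) (1, 0)

/-- the integrand of the action-type functional -/
def FF (s : ℝ) (q : ℝ × ℝ) : ℝ :=
  ((G s q).1 * (gdot G s q).2 - (G s q).2 * (gdot G s q).1) / 2 + f s (G s q)

/-- radial derivative of the isotopy along the ray through `p` -/
def guu (p : ℝ × ℝ) (s u : ℝ) : ℝ × ℝ := fderiv ℝ (Ghat G) (s, u • p) (0, p)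

/-- mixed second derivative -/
def DSU (p : ℝ × ℝ) (s u : ℝ) : ℝ × ℝ :=
  fderiv ℝ (fun z => fderiv ℝ (Ghat G) z ((0:ℝ), p)) (s, u • p) (1, 0)

/-- the `λ`-pullback coefficient along the ray -/
def BB (p : ℝ × ℝ) (s u : ℝ) : ℝ :=
  ((G s (u • p)).1 * (guu G p s u).2 - (G s (u • p)).2 * (guu G p s u).1) / 2

/-- the common mixed derivative -/
def EE (p : ℝ × ℝ) (s u : ℝ) : ℝ :=
  (((gdot G s (u • p)).1 * (guu G p s u).2 + (G s (u • p)).1 * (DSU G p s u).2)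
    - ((gdot G s (u • p)).2 * (guu G p s u).1 + (G s (u • p)).2 * (DSU G p s u).1)) / 2

variable {G f}

section derivs

variable (hGs : ContDiff ℝ (⊤ : ℕ∞) (Ghat G))
include hGs

/-- time slice derivative -/
lemma hasDerivAt_G_time (s : ℝ) (q : ℝ × ℝ) : HasDerivAt (fun s' => G s' q) (gdot G s q) s :=
  hasDerivAt_tslice (hGs.differentiable (by simp)) s q

lemma deriv_G_time (s : ℝ) (q : ℝ × ℝ) : deriv (fun s' => G s' q) s = gdot G s q :=
  (hasDerivAt_G_time hGs s q).deriv

lemma hasDerivAt_G_ray (s : ℝ) (p : ℝ × ℝ) (u : ℝ) :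
    HasDerivAt (fun u' => G s (u' • p)) (guu G p s u) u :=
  hasDerivAt_uslice (hGs.differentiable (by simp)) s p u

lemma contdiff_H2 (p : ℝ × ℝ) :
    ContDiff ℝ 2 (fun z : ℝ × (ℝ × ℝ) => fderiv ℝ (Ghat G) z ((0:ℝ), p)) := by
  exact (hGs.fderiv_right (WithTop.coe_le_coe.2 le_top)).clm_apply contDiff_const

lemma contdiff_H1 : ContDiff ℝ 2 (fun z : ℝ × (ℝ × ℝ) => fderiv ℝ (Ghat G) z (1, 0)) := by
  exact (hGs.fderiv_right (WithTop.coe_le_coe.2 le_top)).clm_apply contDiff_const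

/-- `s`-derivative of `BB` -/
lemma hasDerivAt_BB (p : ℝ × ℝ) (s u : ℝ) : HasDerivAt (fun s' => BB G p s' u) (EE G p s u) s := by
  have c1 : HasDerivAt (fun s' => (G s' (u • p)).1) (gdot G s (u • p)).1 s :=
    (ContinuousLinearMap.fst ℝ ℝ ℝ).hasFDerivAt.comp_hasDerivAt s (hasDerivAt_G_time hGs s (u • p))
  have c3 : HasDerivAt (fun s' => (G s' (u • p)).2) (gdot G s (u • p)).2 s :=
    (ContinuousLinearMap.snd ℝ ℝ ℝ).hasFDerivAt.comp_hasDerivAt s (hasDerivAt_G_time hGs s (u • p))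
  have hH2 : HasDerivAt (fun s' => guu G p s' u) (DSU G p s u) s :=
    hasDerivAt_tslice ((contdiff_H2 hGs p).differentiable (by norm_num)) s (u • p)
  have c2 : HasDerivAt (fun s' => (guu G p s' u).2) (DSU G p s u).2 s :=
    (ContinuousLinearMap.snd ℝ ℝ ℝ).hasFDerivAt.comp_hasDerivAt s hH2
  have c4 : HasDerivAt (fun s' => (guu G p s' u).1) (DSU G p s u).1 s :=
    (ContinuousLinearMap.fst ℝ ℝ ℝ).hasFDerivAt.comp_hasDerivAt s hH2
  exact ((c1.mul c2).sub (c3.mul c4)).div_const 2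

variable (hfs : ContDiff ℝ (⊤ : ℕ∞) (fhat f))
include hfs

omit hGs in
/-- `fderiv` of `f s` in terms of the joint function. -/
lemma fderiv_space (s : ℝ) (X w : ℝ × ℝ) :
    fderiv ℝ (f s) X w = fderiv ℝ (fhat f) (s, X) ((0:ℝ), w) := by
  have hι : HasFDerivAt (fun Y : ℝ × ℝ => ((s : ℝ), Y))
      ((0 : ℝ × ℝ →L[ℝ] ℝ).prod (ContinuousLinearMap.id ℝ (ℝ × ℝ))) X :=
    (hasFDerivAt_const s X).prodMk (hasFDerivAt_id X)
  have hcomp : HasFDerivAt (f s)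
      ((fderiv ℝ (fhat f) (s, X)).comp
        ((0 : ℝ × ℝ →L[ℝ] ℝ).prod (ContinuousLinearMap.id ℝ (ℝ × ℝ)))) X :=
    ((hfs.differentiable (by simp)) ((s : ℝ), X)).hasFDerivAt.comp X hι
  rw [hcomp.fderiv]
  rfl

/-- `u`-derivative of the action integrand, on the relevant region. -/
lemma hasDerivAt_FF_ray {p : ℝ × ℝ} (hp : p ∈ disk)
    (hham : ∀ t ∈ Icc (0:ℝ) 1, ∀ q ∈ disk,
      pdx (f t) (G t q) = -(deriv (fun s => G s q) t).2 ∧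
      pdy (f t) (G t q) = (deriv (fun s => G s q) t).1)
    {s : ℝ} (hs : s ∈ Icc (0:ℝ) 1) {u : ℝ} (hu : u ∈ Icc (0:ℝ) 1) :
    HasDerivAt (fun u' => FF G f s (u' • p)) (EE G p s u) u := by
  have hupd : u • p ∈ disk := smul_mem_disk hp hu.1 hu.2
  set DUS : ℝ × ℝ := fderiv ℝ (fun z => fderiv ℝ (Ghat G) z ((1:ℝ), 0)) (s, u • p)
    ((0:ℝ), p) with hDUS
  have d1 : HasDerivAt (fun u' => (G s (u' • p)).1) (guu G p s u).1 u :=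
    (ContinuousLinearMap.fst ℝ ℝ ℝ).hasFDerivAt.comp_hasDerivAt u (hasDerivAt_G_ray hGs s p u)
  have d3 : HasDerivAt (fun u' => (G s (u' • p)).2) (guu G p s u).2 u :=
    (ContinuousLinearMap.snd ℝ ℝ ℝ).hasFDerivAt.comp_hasDerivAt u (hasDerivAt_G_ray hGs s p u)
  have hH1d : HasDerivAt (fun u' => gdot G s (u' • p)) DUS u :=
    hasDerivAt_uslice ((contdiff_H1 hGs).differentiable (by norm_num)) s p u
  have d2 : HasDerivAt (fun u' => (gdot G s (u' • p)).2) DUS.2 u :=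
    (ContinuousLinearMap.snd ℝ ℝ ℝ).hasFDerivAt.comp_hasDerivAt u hH1d
  have d4 : HasDerivAt (fun u' => (gdot G s (u' • p)).1) DUS.1 u :=
    (ContinuousLinearMap.fst ℝ ℝ ℝ).hasFDerivAt.comp_hasDerivAt u hH1d
  -- the Hamiltonian term
  have dcurve : HasDerivAt (fun u' => ((s : ℝ), G s (u' • p))) ((0:ℝ), guu G p s u) u :=
    (hasDerivAt_const u s).prodMk (hasDerivAt_G_ray hGs s p u)
  have d5 : HasDerivAt (fun u' => f s (G s (u' • p)))
      (fderiv ℝ (fhat f) (s, G s (u • p)) ((0:ℝ), guu G p s u)) u := by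
    have h := ((hfs.differentiable (by simp)) (s, G s (u • p))).hasFDerivAt.comp_hasDerivAt u dcurve
    exact h
  have draw := (((d1.mul d2).sub (d3.mul d4)).div_const 2).add d5
  have hval : ((guu G p s u).1 * (gdot G s (u • p)).2 + (G s (u • p)).1 * DUS.2
        - ((guu G p s u).2 * (gdot G s (u • p)).1 + (G s (u • p)).2 * DUS.1)) / 2
      + fderiv ℝ (fhat f) (s, G s (u • p)) ((0:ℝ), guu G p s u) = EE G p s u := by
    -- Clairaut: DUS = DSU
    have hclair : DUS = DSU G p s u := by
      rw [hDUS, DSU]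
      exact fderiv_fderiv_symm hGs (s, u • p) ((0:ℝ), p) ((1:ℝ), 0)
    -- Hamiltonian relations
    have hham' := hham s hs (u • p) hupd
    have hd1 : pdx (f s) (G s (u • p)) = -(gdot G s (u • p)).2 := by
      rw [hham'.1, deriv_G_time hGs]
    have hd2 : pdy (f s) (G s (u • p)) = (gdot G s (u • p)).1 := by
      rw [hham'.2, deriv_G_time hGs]
    -- decompose the Hamiltonian term
    have hdec : fderiv ℝ (fhat f) (s, G s (u • p)) ((0:ℝ), guu G p s u)
        = (guu G p s u).1 * pdx (f s) (G s (u • p))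
          + (guu G p s u).2 * pdy (f s) (G s (u • p)) := by
      rw [← fderiv_space hfs, clm_apply_decomp]
      rfl
    rw [hdec, hd1, hd2, hclair, EE]
    ring
  rw [← hval]
  exact draw

end derivs
end key


/-! ### Continuity -/

lemma cont_gdot (hGs : ContDiff ℝ (⊤ : ℕ∞) (Ghat G)) :
    Continuous (fun z : ℝ × (ℝ × ℝ) => gdot G z.1 z.2) := by
  have h := hGs.continuous_fderiv_apply (n := (⊤ : ℕ∞)) (by simp)
  exact h.comp (continuous_id.prodMk continuous_const)

lemma cont_FF (hGs : ContDiff ℝ (⊤ : ℕ∞) (Ghat G)) (hfs : ContDiff ℝ (⊤ : ℕ∞) (fhat f)) :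
    Continuous (fun z : ℝ × (ℝ × ℝ) => FF G f z.1 z.2) := by
  have hg := hGs.continuous
  have hgd := cont_gdot hGs
  have hf := hfs.continuous
  unfold FF
  apply Continuous.add
  · apply Continuous.div_const
    apply Continuous.sub
    · exact ((continuous_fst.comp hg).mul (continuous_snd.comp hgd))
    · exact ((continuous_snd.comp hg).mul (continuous_fst.comp hgd))
  · exact hf.comp (continuous_fst.prodMk hg)

lemma cont_EE (hGs : ContDiff ℝ (⊤ : ℕ∞) (Ghat G)) (p : ℝ × ℝ) :
    Continuous (fun z : ℝ × ℝ => EE G p z.1 z.2) := by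
  have hT : Continuous (fun z : ℝ × ℝ => ((z.1 : ℝ), z.2 • p)) := by fun_prop
  have hg : Continuous (fun z : ℝ × ℝ => G z.1 (z.2 • p)) := hGs.continuous.comp hT
  have hgd : Continuous (fun z : ℝ × ℝ => gdot G z.1 (z.2 • p)) :=
    (cont_gdot hGs).comp hT
  have hguu : Continuous (fun z : ℝ × ℝ => guu G p z.1 z.2) := by
    have h := hGs.continuous_fderiv_apply (n := (⊤ : ℕ∞)) (by simp)
    exact (h.comp (continuous_id.prodMk continuous_const)).comp hT
  have hdsu : Continuous (fun z : ℝ × ℝ => DSU G p z.1 z.2) := by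
    have h2 := (contdiff_H2 hGs p).continuous_fderiv_apply (by norm_num)
    exact ((h2.comp (continuous_id.prodMk continuous_const)).comp hT)
  unfold EE
  apply Continuous.div_const
  apply Continuous.sub
  · exact ((continuous_fst.comp hgd).mul (continuous_snd.comp hguu)).add
      ((continuous_fst.comp hg).mul (continuous_snd.comp hdsu))
  · exact ((continuous_snd.comp hgd).mul (continuous_fst.comp hguu)).add
      ((continuous_snd.comp hg).mul (continuous_fst.comp hdsu))

/-! ### Interval Fubini -/

lemma interval_swap (E : ℝ → ℝ → ℝ) (hE : Continuous (uncurry E)) :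
    ∫ s in (0:ℝ)..1, (∫ u in (0:ℝ)..1, E s u) = ∫ u in (0:ℝ)..1, (∫ s in (0:ℝ)..1, E s u) := by
  rw [intervalIntegral.integral_of_le (zero_le_one), intervalIntegral.integral_of_le zero_le_one]
  simp_rw [intervalIntegral.integral_of_le (zero_le_one : (0:ℝ) ≤ 1)]
  apply integral_integral_swap
  rw [Measure.prod_restrict]
  apply (hE.continuousOn.integrableOn_compact (isCompact_Icc.prod isCompact_Icc)).mono_set
  exact prod_mono Ioc_subset_Icc_self Ioc_subset_Icc_self

/-! ### The key difference identity -/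

lemma key_difference (hGs : ContDiff ℝ (⊤ : ℕ∞) (Ghat G)) (hfs : ContDiff ℝ (⊤ : ℕ∞) (fhat f))
    {p : ℝ × ℝ} (hp : p ∈ disk)
    (hham : ∀ t ∈ Icc (0:ℝ) 1, ∀ q ∈ disk,
      pdx (f t) (G t q) = -(deriv (fun s => G s q) t).2 ∧
      pdy (f t) (G t q) = (deriv (fun s => G s q) t).1) :
    (∫ s in Ioc (0:ℝ) 1, FF G f s p) - (∫ s in Ioc (0:ℝ) 1, FF G f s 0)
      = ∫ u in (0:ℝ)..1, (BB G p 1 u - BB G p 0 u) := by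
  have hFFc := cont_FF hGs hfs
  have hEEc := cont_EE hGs p
  -- integrability of s ↦ FF s q on Ioc
  have hint : ∀ q : ℝ × ℝ, IntegrableOn (fun s => FF G f s q) (Ioc (0:ℝ) 1) := by
    intro q
    apply Continuous.integrableOn_Ioc
    exact hFFc.comp (continuous_id.prodMk continuous_const)
  rw [← integral_sub (hint p) (hint 0)]
  -- FTC in u
  have hftcu : ∀ s ∈ Ioc (0:ℝ) 1, FF G f s p - FF G f s 0 = ∫ u in (0:ℝ)..1, EE G p s u := by
    intro s hs
    have hs' : s ∈ Icc (0:ℝ) 1 := ⟨le_of_lt hs.1, hs.2⟩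
    have hderiv : ∀ u ∈ uIcc (0:ℝ) 1, HasDerivAt (fun u' => FF G f s (u' • p)) (EE G p s u) u := by
      intro u hu
      rw [uIcc_of_le zero_le_one] at hu
      exact hasDerivAt_FF_ray hGs hfs hp hham hs' hu
    have hintEE : IntervalIntegrable (fun u => EE G p s u) volume 0 1 :=
      (hEEc.comp (continuous_const.prodMk continuous_id)).intervalIntegrable 0 1
    rw [intervalIntegral.integral_eq_sub_of_hasDerivAt hderiv hintEE]
    rw [one_smul, zero_smul]
  rw [setIntegral_congr_fun measurableSet_Ioc hftcu]
  rw [← intervalIntegral.integral_of_le zero_le_one]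
  rw [interval_swap (fun s u => EE G p s u) hEEc]
  -- FTC in s
  apply intervalIntegral.integral_congr
  intro u _
  show (∫ s in (0:ℝ)..1, EE G p s u) = BB G p 1 u - BB G p 0 u
  have hderivs : ∀ s ∈ uIcc (0:ℝ) 1, HasDerivAt (fun s' => BB G p s' u) (EE G p s u) s :=
    fun s _ => hasDerivAt_BB hGs p s u
  have hintEEs : IntervalIntegrable (fun s => EE G p s u) volume 0 1 :=
    (hEEc.comp (continuous_id.prodMk continuous_const)).intervalIntegrable 0 1
  rw [intervalIntegral.integral_eq_sub_of_hasDerivAt hderivs hintEEs]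


/-- pointwise evaluation of `FF` composed with the inverse map. -/
lemma FF_comp_inverse (hGs : ContDiff ℝ (⊤ : ℕ∞) (Ghat G))
    (hham : ∀ t ∈ Icc (0:ℝ) 1, ∀ q ∈ disk,
      pdx (f t) (G t q) = -(deriv (fun s => G s q) t).2 ∧
      pdy (f t) (G t q) = (deriv (fun s => G s q) t).1)
    {s : ℝ} (hs : s ∈ Icc (0:ℝ) 1) {g' : ℝ × ℝ → ℝ × ℝ}
    (hg'm : MapsTo g' disk disk) (hright : ∀ p ∈ disk, G s (g' p) = p)
    {q : ℝ × ℝ} (hq : q ∈ disk) :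
    FF G f s (g' q) = 2 * f s q - (1/2) * (q.1 * pdx (f s) q + q.2 * pdy (f s) q
      + 2 * f s q) := by
  have hg'q : g' q ∈ disk := hg'm hq
  have hham' := hham s hs (g' q) hg'q
  have hGq : G s (g' q) = q := hright q hq
  have h1 : pdx (f s) q = -(gdot G s (g' q)).2 := by
    have h := hham'.1
    rw [deriv_G_time hGs] at h
    rwa [hGq] at h
  have h2 : pdy (f s) q = (gdot G s (g' q)).1 := by
    have h := hham'.2
    rw [deriv_G_time hGs] at h
    rwa [hGq] at h
  rw [FF, hGq]
  rw [show (gdot G s (g' q)).2 = -pdx (f s) q by rw [h1]; ring,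
    show (gdot G s (g' q)).1 = pdy (f s) q by rw [h2]]
  ring

/-- The inner spatial integral of `FF` equals twice the Hamiltonian integral. -/
lemma inner_integral_FF (hGs : ContDiff ℝ (⊤ : ℕ∞) (Ghat G)) (hfs : ContDiff ℝ (⊤ : ℕ∞) (fhat f))
    (hsymp : ∀ t ∈ Icc (0:ℝ) 1, IsSymp (G t))
    (hham : ∀ t ∈ Icc (0:ℝ) 1, ∀ q ∈ disk,
      pdx (f t) (G t q) = -(deriv (fun s => G s q) t).2 ∧
      pdy (f t) (G t q) = (deriv (fun s => G s q) t).1)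
    (hf0 : ∀ t ∈ Icc (0:ℝ) 1, ∀ p ∈ bdry, f t p = 0)
    {s : ℝ} (hs : s ∈ Icc (0:ℝ) 1) :
    ∫ p in disk, FF G f s p = 2 * ∫ p in disk, f s p := by
  obtain ⟨hc, hmaps, hjac, g', hg's, hg'm, hleft, hright⟩ := hsymp s hs
  rw [symp_change_of_variables hc hg's hmaps hg'm hleft hright hjac (FF G f s)]
  have hfsm : ContDiff ℝ (⊤ : ℕ∞) (f s) := by
    have : ContDiff ℝ (⊤ : ℕ∞) (fun X : ℝ × ℝ => fhat f (s, X)) :=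
      hfs.comp (contDiff_const.prodMk contDiff_id)
    exact this
  rw [setIntegral_congr_fun measurableSet_disk
    (fun q hq => FF_comp_inverse hGs hham hs hg'm hright hq)]
  have hVc : Continuous (fun q : ℝ × ℝ => q.1 * pdx (f s) q + q.2 * pdy (f s) q
      + 2 * f s q) := by
    apply Continuous.add
    apply Continuous.add
    · exact continuous_fst.mul (continuous_pdx hfsm)
    · exact continuous_snd.mul (continuous_pdy hfsm)
    · exact continuous_const.mul hfsm.continuous
  have hfc : Continuous (f s) := hfsm.continuous
  have hint1 : IntegrableOn (fun q : ℝ × ℝ => 2 * f s q) disk :=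
    (continuous_const.mul hfc).continuousOn.integrableOn_compact isCompact_disk
  have hint2 : IntegrableOn (fun q : ℝ × ℝ => (1/2) * (q.1 * pdx (f s) q
      + q.2 * pdy (f s) q + 2 * f s q)) disk :=
    (continuous_const.mul hVc).continuousOn.integrableOn_compact isCompact_disk
  rw [integral_sub hint1 hint2]
  rw [MeasureTheory.integral_const_mul, MeasureTheory.integral_const_mul]
  rw [disk_ibp (f s) hfsm (hf0 s hs)]
  ring

/-- Fubini for the double integral of `FF` over `disk × [0,1]`. -/
lemma fubini_FF (hGs : ContDiff ℝ (⊤ : ℕ∞) (Ghat G)) (hfs : ContDiff ℝ (⊤ : ℕ∞) (fhat f)) :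
    ∫ p in disk, (∫ s in Ioc (0:ℝ) 1, FF G f s p)
      = ∫ s in Ioc (0:ℝ) 1, (∫ p in disk, FF G f s p) := by
  apply integral_integral_swap
  rw [Measure.prod_restrict]
  apply ((cont_FF hGs hfs).comp continuous_swap).continuousOn.integrableOn_compact
    (isCompact_disk.prod isCompact_Icc) |>.mono_set
  exact prod_mono Subset.rfl Ioc_subset_Icc_self

/-- integrability of the inner time integral over the disk. -/
lemma integrable_inner (hGs : ContDiff ℝ (⊤ : ℕ∞) (Ghat G)) (hfs : ContDiff ℝ (⊤ : ℕ∞) (fhat f)) :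
    IntegrableOn (fun p => ∫ s in Ioc (0:ℝ) 1, FF G f s p) disk := by
  have h : Integrable (fun z : (ℝ × ℝ) × ℝ => FF G f z.2 z.1)
      ((volume.restrict disk).prod (volume.restrict (Ioc (0:ℝ) 1))) := by
    rw [Measure.prod_restrict]
    apply ((cont_FF hGs hfs).comp continuous_swap).continuousOn.integrableOn_compact
      (isCompact_disk.prod isCompact_Icc) |>.mono_set
    exact prod_mono Subset.rfl Ioc_subset_Icc_self
  exact h.integral_prod_left

/-- The total action identity: `∫_D h = 2 R`. -/
lemma action_eq (hGs : ContDiff ℝ (⊤ : ℕ∞) (Ghat G)) (hfs : ContDiff ℝ (⊤ : ℕ∞) (fhat f))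
    (hsymp : ∀ t ∈ Icc (0:ℝ) 1, IsSymp (G t))
    (hham : ∀ t ∈ Icc (0:ℝ) 1, ∀ q ∈ disk,
      pdx (f t) (G t q) = -(deriv (fun s => G s q) t).2 ∧
      pdy (f t) (G t q) = (deriv (fun s => G s q) t).1)
    (hf0 : ∀ t ∈ Icc (0:ℝ) 1, ∀ p ∈ bdry, f t p = 0) :
    ∫ p in disk, (∫ s in Ioc (0:ℝ) 1, FF G f s p)
      = 2 * ∫ t in (0:ℝ)..1, ∫ p in disk, f t p := by
  rw [fubini_FF hGs hfs]
  rw [setIntegral_congr_fun measurableSet_Ioc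
    (fun s hs => inner_integral_FF hGs hfs hsymp hham hf0 ⟨le_of_lt hs.1, hs.2⟩)]
  rw [intervalIntegral.integral_of_le zero_le_one, ← MeasureTheory.integral_const_mul]


/-- One-point membership. -/
lemma one_zero_mem_bdry : ((1:ℝ), (0:ℝ)) ∈ bdry := by
  show (1:ℝ) ^ 2 + (0:ℝ) ^ 2 = 1; norm_num

lemma one_zero_mem_disk : ((1:ℝ), (0:ℝ)) ∈ disk := by
  show (1:ℝ) ^ 2 + (0:ℝ) ^ 2 ≤ 1; norm_num

/-- the boundary lift identity. -/
lemma boundary_exp (hGs : ContDiff ℝ (⊤ : ℕ∞) (Ghat G)) (hfs : ContDiff ℝ (⊤ : ℕ∞) (fhat f))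
    (hsymp : ∀ t ∈ Icc (0:ℝ) 1, IsSymp (G t)) (hG0 : ∀ p ∈ disk, G 0 p = p)
    (hf0 : ∀ t ∈ Icc (0:ℝ) 1, ∀ p ∈ bdry, f t p = 0) :
    Complex.exp (Complex.ofReal (2 * ∫ s in Ioc (0:ℝ) 1, FF G f s ((1:ℝ), (0:ℝ))) * Complex.I)
      = Complex.ofReal (G 1 ((1:ℝ), (0:ℝ))).1
        + Complex.ofReal (G 1 ((1:ℝ), (0:ℝ))).2 * Complex.I := by
  set p₀ : ℝ × ℝ := ((1:ℝ), (0:ℝ)) with hp₀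
  set γ : ℝ → ℝ × ℝ := fun s => G s p₀ with hγ
  set κ : ℝ → ℝ := fun s => (γ s).1 * (gdot G s p₀).2 - (γ s).2 * (gdot G s p₀).1 with hκ
  have hγd : ∀ s, HasDerivAt γ (gdot G s p₀) s := fun s => hasDerivAt_G_time hGs s p₀
  have hγc : Continuous γ := hGs.continuous.comp (continuous_id.prodMk continuous_const)
  have hγ'c : Continuous (fun s => gdot G s p₀) :=
    (cont_gdot hGs).comp (continuous_id.prodMk continuous_const)
  have hcirc : ∀ s ∈ Icc (0:ℝ) 1, ((γ s).1) ^ 2 + ((γ s).2) ^ 2 = 1 := by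
    intro s hs
    exact isSymp_maps_bdry (hsymp s hs) p₀ one_zero_mem_bdry
  have h0 : γ 0 = ((1:ℝ), (0:ℝ)) := by
    show G 0 p₀ = ((1:ℝ), (0:ℝ))
    rw [hG0 p₀ one_zero_mem_disk]
  have hlift := circle_lift hγd hγ'c hγc hcirc h0
  -- 2 ∫ FF = ∫ κ
  have hFFκ : ∀ s ∈ Ioc (0:ℝ) 1, FF G f s p₀ = κ s / 2 := by
    intro s hs
    have hs' : s ∈ Icc (0:ℝ) 1 := ⟨le_of_lt hs.1, hs.2⟩
    have hbval : f s (G s p₀) = 0 := hf0 s hs' (G s p₀)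
      (isSymp_maps_bdry (hsymp s hs') p₀ one_zero_mem_bdry)
    rw [FF, hbval, hκ]
    ring
  have h2int : 2 * (∫ s in Ioc (0:ℝ) 1, FF G f s p₀) = ∫ s in (0:ℝ)..1, κ s := by
    rw [setIntegral_congr_fun measurableSet_Ioc hFFκ,
      ← intervalIntegral.integral_of_le zero_le_one,
      intervalIntegral.integral_div]
    ring
  rw [show Complex.ofReal (2 * ∫ s in Ioc (0:ℝ) 1, FF G f s ((1:ℝ), (0:ℝ)))
    = Complex.ofReal (∫ s in (0:ℝ)..1, κ s) from congrArg _ h2int]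
  exact hlift

/-- The constant difference is `π` times an integer. -/
lemma exists_int_diff (hGs : ContDiff ℝ (⊤ : ℕ∞) (Ghat G)) (hfs : ContDiff ℝ (⊤ : ℕ∞) (fhat f))
    (hG's : ContDiff ℝ (⊤ : ℕ∞) (Ghat G')) (hf's : ContDiff ℝ (⊤ : ℕ∞) (fhat f'))
    (hsymp : ∀ t ∈ Icc (0:ℝ) 1, IsSymp (G t)) (hG0 : ∀ p ∈ disk, G 0 p = p)
    (hsymp' : ∀ t ∈ Icc (0:ℝ) 1, IsSymp (G' t)) (hG0' : ∀ p ∈ disk, G' 0 p = p)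
    (hf0 : ∀ t ∈ Icc (0:ℝ) 1, ∀ p ∈ bdry, f t p = 0)
    (hf0' : ∀ t ∈ Icc (0:ℝ) 1, ∀ p ∈ bdry, f' t p = 0)
    (hend : ∀ p ∈ disk, G 1 p = G' 1 p) :
    ∃ k : ℤ, (∫ s in Ioc (0:ℝ) 1, FF G f s ((1:ℝ), (0:ℝ)))
      - (∫ s in Ioc (0:ℝ) 1, FF G' f' s ((1:ℝ), (0:ℝ))) = π * k := by
  have hb := boundary_exp hGs hfs hsymp hG0 hf0
  have hb' := boundary_exp hG's hf's hsymp' hG0' hf0'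
  rw [hend ((1:ℝ), (0:ℝ)) one_zero_mem_disk] at hb
  have hexp : Complex.exp (Complex.ofReal (2 * ∫ s in Ioc (0:ℝ) 1, FF G f s ((1:ℝ), (0:ℝ))) * Complex.I)
      = Complex.exp (Complex.ofReal (2 * ∫ s in Ioc (0:ℝ) 1, FF G' f' s ((1:ℝ), (0:ℝ))) * Complex.I) := by
    rw [hb, hb']
  rw [Complex.exp_eq_exp_iff_exists_int] at hexp
  obtain ⟨n, hn⟩ := hexp
  refine ⟨n, ?_⟩
  have him := congrArg Complex.im hn
  simp only [Complex.add_im, Complex.mul_im, Complex.I_im, Complex.I_re,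
    Complex.ofReal_re, Complex.ofReal_im, Complex.intCast_im, Complex.intCast_re] at him
  push_cast at him ⊢
  norm_num at him
  linarith


/-- Equality of the endpoint `BB`-data for two isotopies with the same endpoint. -/
lemma BB_ends_eq (hGs : ContDiff ℝ (⊤ : ℕ∞) (Ghat G)) (hG's : ContDiff ℝ (⊤ : ℕ∞) (Ghat G'))
    (hG0 : ∀ p ∈ disk, G 0 p = p) (hG0' : ∀ p ∈ disk, G' 0 p = p)
    (hend : ∀ p ∈ disk, G 1 p = G' 1 p) {p : ℝ × ℝ} (hp : p ∈ disk)
    {u : ℝ} (hu : u ∈ Ioo (0:ℝ) 1) :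
    BB G p 1 u - BB G p 0 u = BB G' p 1 u - BB G' p 0 u := by
  have hnhds : Ioo (0:ℝ) 1 ∈ 𝓝 u := Ioo_mem_nhds hu.1 hu.2
  -- guu at time 1 agree
  have hev1 : (fun u' => G 1 (u' • p)) =ᶠ[𝓝 u] (fun u' => G' 1 (u' • p)) := by
    filter_upwards [hnhds] with u' hu'
    exact hend _ (smul_mem_disk hp (le_of_lt hu'.1) (le_of_lt hu'.2))
  have hguu1 : guu G p 1 u = guu G' p 1 u := by
    have d1 := (hasDerivAt_G_ray hGs 1 p u).deriv
    have d2 := (hasDerivAt_G_ray hG's 1 p u).deriv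
    rw [← d1, ← d2]
    exact hev1.deriv_eq
  have hpt1 : G 1 (u • p) = G' 1 (u • p) :=
    hend _ (smul_mem_disk hp (le_of_lt hu.1) (le_of_lt hu.2))
  -- BB at time 0 vanish
  have hBB0 : ∀ (H : ℝ → ℝ × ℝ → ℝ × ℝ), ContDiff ℝ (⊤ : ℕ∞) (Ghat H) →
      (∀ q ∈ disk, H 0 q = q) → BB H p 0 u = 0 := by
    intro H hHs hH0
    have hev0 : (fun u' => H 0 (u' • p)) =ᶠ[𝓝 u] (fun u' => u' • p) := by
      filter_upwards [hnhds] with u' hu'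
      exact hH0 _ (smul_mem_disk hp (le_of_lt hu'.1) (le_of_lt hu'.2))
    have hguu0 : guu H p 0 u = p := by
      have d1 := (hasDerivAt_G_ray hHs 0 p u).deriv
      have d2 : deriv (fun u' : ℝ => u' • p) u = p := by
        have : HasDerivAt (fun u' : ℝ => u' • p) p u := by
          simpa using (hasDerivAt_id u).smul_const p
        exact this.deriv
      rw [← d1, hev0.deriv_eq, d2]
    have hpt0 : H 0 (u • p) = u • p := hH0 _ (smul_mem_disk hp (le_of_lt hu.1) (le_of_lt hu.2))
    rw [BB, hpt0, hguu0]
    have e1 : (u • p).1 = u * p.1 := rfl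
    have e2 : (u • p).2 = u * p.2 := rfl
    rw [e1, e2]
    ring
  rw [hBB0 G hGs hG0, hBB0 G' hG's hG0', BB, BB, hguu1, hpt1]

/-- The difference function is constant on the disk. -/
lemma diff_const (hGs : ContDiff ℝ (⊤ : ℕ∞) (Ghat G)) (hfs : ContDiff ℝ (⊤ : ℕ∞) (fhat f))
    (hG's : ContDiff ℝ (⊤ : ℕ∞) (Ghat G')) (hf's : ContDiff ℝ (⊤ : ℕ∞) (fhat f'))
    (hG0 : ∀ p ∈ disk, G 0 p = p) (hG0' : ∀ p ∈ disk, G' 0 p = p)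
    (hham : ∀ t ∈ Icc (0:ℝ) 1, ∀ q ∈ disk,
      pdx (f t) (G t q) = -(deriv (fun s => G s q) t).2 ∧
      pdy (f t) (G t q) = (deriv (fun s => G s q) t).1)
    (hham' : ∀ t ∈ Icc (0:ℝ) 1, ∀ q ∈ disk,
      pdx (f' t) (G' t q) = -(deriv (fun s => G' s q) t).2 ∧
      pdy (f' t) (G' t q) = (deriv (fun s => G' s q) t).1)
    (hend : ∀ p ∈ disk, G 1 p = G' 1 p) {p : ℝ × ℝ} (hp : p ∈ disk) :
    (∫ s in Ioc (0:ℝ) 1, FF G f s p) - (∫ s in Ioc (0:ℝ) 1, FF G' f' s p)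
      = (∫ s in Ioc (0:ℝ) 1, FF G f s 0) - (∫ s in Ioc (0:ℝ) 1, FF G' f' s 0) := by
  have h1 := key_difference hGs hfs hp hham
  have h2 := key_difference hG's hf's hp hham'
  have hae : ∀ᵐ u : ℝ, u ∈ Ioc (0:ℝ) 1 → u ∈ Ioo (0:ℝ) 1 := by
    rw [ae_iff]
    refine measure_mono_null (fun x hx => ?_) (measure_singleton (1:ℝ))
    simp only [mem_setOf_eq, Classical.not_imp] at hx
    have h3 := hx.1
    have h4 := hx.2
    simp only [mem_Ioo, mem_Ioc, not_and, not_lt] at h3 h4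
    have : x = 1 := le_antisymm h3.2 (h4 h3.1)
    simp [this]
  have hBeq : ∫ u in (0:ℝ)..1, (BB G p 1 u - BB G p 0 u)
      = ∫ u in (0:ℝ)..1, (BB G' p 1 u - BB G' p 0 u) := by
    rw [intervalIntegral.integral_of_le zero_le_one,
      intervalIntegral.integral_of_le zero_le_one]
    apply setIntegral_congr_ae measurableSet_Ioc
    filter_upwards [hae] with u hu huIoc
    exact BB_ends_eq hGs hG's hG0 hG0' hend hp (hu huIoc)
  linarith [h1, h2, hBeq ▸ h1]


/-- if two smooth isotopies in `Symp(D)` starting at the identity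
have the same endpoint, then `(2/π²)(R((g_t)) - R((g'_t)))` is an integer;
hence `(2/π²) R` descends to a map `Symp(D) → ℝ/ℤ`. -/
theorem R_difference_is_integer
    (G G' : ℝ → ℝ × ℝ → ℝ × ℝ) (f f' : ℝ → ℝ × ℝ → ℝ)
    (hG : IsIsotopy G) (hf : IsHam G f)
    (hf0 : ∀ t ∈ Icc (0:ℝ) 1, ∀ p ∈ bdry, f t p = 0)
    (hG' : IsIsotopy G') (hf' : IsHam G' f')
    (hf0' : ∀ t ∈ Icc (0:ℝ) 1, ∀ p ∈ bdry, f' t p = 0)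
    (hend : ∀ p ∈ disk, G 1 p = G' 1 p) :
    ∃ k : ℤ,
      (2 / π ^ 2) * ((∫ t in (0:ℝ)..1, ∫ p in disk, f t p) -
        (∫ t in (0:ℝ)..1, ∫ p in disk, f' t p)) = (k : ℝ) := by
  obtain ⟨hGs₀, hsymp, hG0⟩ := hG
  obtain ⟨hG's₀, hsymp', hG0'⟩ := hG'
  obtain ⟨hfs₀, hham⟩ := hf
  obtain ⟨hf's₀, hham'⟩ := hf'
  have hGs : ContDiff ℝ (⊤ : ℕ∞) (Ghat G) := hGs₀
  have hG's : ContDiff ℝ (⊤ : ℕ∞) (Ghat G') := hG's₀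
  have hfs : ContDiff ℝ (⊤ : ℕ∞) (fhat f) := hfs₀
  have hf's : ContDiff ℝ (⊤ : ℕ∞) (fhat f') := hf's₀
  obtain ⟨k, hk⟩ := exists_int_diff hGs hfs hG's hf's hsymp hG0 hsymp' hG0'
    hf0 hf0' hend
  refine ⟨k, ?_⟩
  -- the difference function is constantly `π k` on the disk
  have hconstval : ∀ p ∈ disk,
      (∫ s in Ioc (0:ℝ) 1, FF G f s p) - (∫ s in Ioc (0:ℝ) 1, FF G' f' s p) = π * k := by
    intro p hp
    rw [diff_const hGs hfs hG's hf's hG0 hG0' hham hham' hend hp,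
      ← diff_const hGs hfs hG's hf's hG0 hG0' hham hham' hend one_zero_mem_disk]
    exact hk
  -- integrate over the disk
  have hineq : ∫ p in disk, ((∫ s in Ioc (0:ℝ) 1, FF G f s p)
      - (∫ s in Ioc (0:ℝ) 1, FF G' f' s p)) = π * (π * k) := by
    rw [setIntegral_congr_fun measurableSet_disk hconstval, setIntegral_const]
    have harea : (volume disk).toReal = π := by
      have := area_disk
      rwa [setIntegral_const, smul_eq_mul, mul_one] at this
    rw [measureReal_def, harea, smul_eq_mul]
  rw [integral_sub (integrable_inner hGs hfs) (integrable_inner hG's hf's)] at hineq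
  rw [action_eq hGs hfs hsymp hham hf0, action_eq hG's hf's hsymp' hham' hf0'] at hineq
  have hπ : (π : ℝ) ≠ 0 := Real.pi_ne_zero
  field_simp
  nlinarith [hineq]
end
end
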